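/- Suppose w is an ω-word over 𝒫 ∪ {s} (s ∉ 𝒫) such that, for every position j, the truth value of s changes between j and j+1 if and only if the restriction of w to 𝒫 changes between j and j+1 (i.e., (s ∈ w(j+1)) ≠ (s ∈ w(j)) iff w(j+1)∖{s} ≠ w(j)∖{s}). Let π be a purely propositional formula over 𝒫 and i a position such that there exists a non-stuttering step at or after i, and let j be the least position j ≥ i with w(j+1) ≠ w(j). Then w,i ⊨ X⟨π⟩ if and only if w,j+1 ⊨ π. -/

import Mathlib

inductive LTL (α : Type) : Type
  | atom : α → LTL α
  | not : LTL α → LTL α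
  | and : LTL α → LTL α → LTL α
  | until_ : LTL α → LTL α → LTL α
  | next : LTL α → LTL α

abbrev Word (α : Type) := ℕ → Set α

def LTL.Sat {α : Type} (w : Word α) : LTL α → ℕ → Prop
  | .atom p, i => p ∈ w i
  | .not φ, i => ¬ φ.Sat w i
  | .and φ ψ, i => φ.Sat w i ∧ ψ.Sat w i
  | .until_ φ ψ, i => ∃ j, i ≤ j ∧ ψ.Sat w j ∧ ∀ k, i ≤ k → k < j → φ.Sat w k
  | .next φ, i => φ.Sat w (i+1)

def LTL.Satisfiable {α : Type} (φ : LTL α) : Prop := ∃ w : Word α, φ.Sat w 0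

def LTL.Qualitative {α : Type} : LTL α → Prop
  | .atom _ => True
  | .not φ => φ.Qualitative
  | .and φ ψ => φ.Qualitative ∧ ψ.Qualitative
  | .until_ φ ψ => φ.Qualitative ∧ ψ.Qualitative
  | .next _ => False

def LTL.Propositional {α : Type} : LTL α → Prop
  | .atom _ => True
  | .not φ => φ.Propositional
  | .and φ ψ => φ.Propositional ∧ ψ.Propositional
  | .until_ _ _ => False
  | .next _ => False

def LTL.size {α : Type} : LTL α → ℕ
  | .atom _ => 1
  | .not φ => φ.size + 1
  | .and φ ψ => φ.size + ψ.size + 1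
  | .until_ φ ψ => φ.size + ψ.size + 1
  | .next φ => φ.size + 1

def StutterStep {α : Type} (w : Word α) (i : ℕ) : Prop :=
  w (i+1) = w i ∧ ∃ j, i < j ∧ w j ≠ w i

def NonStutterStep {α : Type} (w : Word α) (i : ℕ) : Prop :=
  w (i+1) ≠ w i ∨ ∀ j, w (i+j) = w i

def StutterRemoval {α : Type} (w w' : Word α) : Prop :=
  ∃ f : ℕ → ℕ, StrictMono f ∧ (∀ k, w' k = w (f k)) ∧
    ∀ i, i ∉ Set.range f → StutterStep w i

def StutterEquiv {α : Type} (w w' : Word α) : Prop :=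
  StutterRemoval w w' ∨ StutterRemoval w' w

def ClosedUnderStuttering {α : Type} (W : Set (Word α)) : Prop :=
  ∀ w ∈ W, ∀ w', StutterEquiv w w' → w' ∈ W


def LTL.or {α : Type} (φ ψ : LTL α) : LTL α := .not (.and (.not φ) (.not ψ))
def LTL.imp {α : Type} (φ ψ : LTL α) : LTL α := LTL.or (.not φ) ψ
/-- Release: `φ R ψ := ¬(¬φ U ¬ψ)`. -/
def LTL.release {α : Type} (φ ψ : LTL α) : LTL α := .not (.until_ (.not φ) (.not ψ))
def LTL.map {α β : Type} (f : α → β) : LTL α → LTL β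
  | .atom p => .atom (f p)
  | .not φ => .not (φ.map f)
  | .and φ ψ => .and (φ.map f) (ψ.map f)
  | .until_ φ ψ => .until_ (φ.map f) (ψ.map f)
  | .next φ => .next (φ.map f)

/-- The fresh letter `s`, adjoined to the alphabet `α` as `Sum.inr ()`. -/
def sL {α : Type} : LTL (α ⊕ Unit) := .atom (Sum.inr ())

/-- The qualitative relaxed next
`X⟨π⟩ := (s U π ∨ ¬s U π) ∧ (π ∧ s ⇒ ¬s R π) ∧ (π ∧ ¬s ⇒ s R π)`. -/
def relaxX {α : Type} (π : LTL (α ⊕ Unit)) : LTL (α ⊕ Unit) :=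
  LTL.and (LTL.or (.until_ sL π) (.until_ (.not sL) π))
    (LTL.and ((LTL.and π sL).imp (LTL.release (.not sL) π))
             ((LTL.and π (.not sL)).imp (LTL.release sL π)))

/-!
Between `i` and `j` the word is constant, so `π` and `s` keep their values there, while the
link between `s` and the letters of `𝒫` forces `s` to flip at the step `j → j + 1`. Say `s`
holds at `i` (the other case is symmetric). Then `s U π` can only be witnessed inside the
block `[i, j]` or at `j + 1`, `¬s U π` only at `i`, and `¬s R π` asks `π` exactly on the block
and at `j + 1`; together these say that `π` holds at `j + 1`.
-/

namespace LTL

variable {α : Type}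

theorem sat_or (φ ψ : LTL α) (w : Word α) (i : ℕ) :
    (φ.or ψ).Sat w i ↔ φ.Sat w i ∨ ψ.Sat w i := by
  simp only [LTL.or, Sat]
  tauto

theorem sat_imp (φ ψ : LTL α) (w : Word α) (i : ℕ) :
    (φ.imp ψ).Sat w i ↔ (φ.Sat w i → ψ.Sat w i) := by
  simp only [LTL.imp, sat_or, Sat]
  tauto

theorem sat_release (φ ψ : LTL α) (w : Word α) (i : ℕ) :
    (φ.release ψ).Sat w i ↔ ∀ k, i ≤ k → ψ.Sat w k ∨ ∃ m, i ≤ m ∧ m < k ∧ φ.Sat w m := by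
  simp only [release, Sat]
  push Not
  refine forall₂_congr fun k _ => ?_
  tauto

theorem Propositional.map {β : Type} (f : α → β) {π : LTL α} (hπ : π.Propositional) :
    (π.map f).Propositional := by
  induction π with
  | atom => trivial
  | not _ ih => exact ih hπ
  | and _ _ ih₁ ih₂ => exact ⟨ih₁ hπ.1, ih₂ hπ.2⟩
  | until_ | next => exact hπ.elim

theorem Propositional.sat_congr {φ : LTL α} (hφ : φ.Propositional) {w : Word α} {k k' : ℕ}
    (h : w k = w k') : φ.Sat w k ↔ φ.Sat w k' := by
  induction φ with
  | atom => simp only [Sat, h]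
  | not _ ih => exact not_congr (ih hφ)
  | and _ _ ih₁ ih₂ => exact and_congr (ih₁ hφ.1) (ih₂ hφ.2)
  | until_ | next => exact hφ.elim

end LTL

theorem sat_relaxX {α : Type} (φ : LTL (α ⊕ Unit)) (w : Word (α ⊕ Unit)) (i : ℕ) :
    (relaxX φ).Sat w i ↔
      ((∃ k, i ≤ k ∧ φ.Sat w k ∧ ∀ m, i ≤ m → m < k → Sum.inr () ∈ w m) ∨
        (∃ k, i ≤ k ∧ φ.Sat w k ∧ ∀ m, i ≤ m → m < k → Sum.inr () ∉ w m)) ∧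
      (φ.Sat w i ∧ Sum.inr () ∈ w i →
        ∀ k, i ≤ k → φ.Sat w k ∨ ∃ m, i ≤ m ∧ m < k ∧ Sum.inr () ∉ w m) ∧
      (φ.Sat w i ∧ Sum.inr () ∉ w i →
        ∀ k, i ≤ k → φ.Sat w k ∨ ∃ m, i ≤ m ∧ m < k ∧ Sum.inr () ∈ w m) := by
  simp only [relaxX, LTL.sat_or, LTL.sat_imp, LTL.sat_release, LTL.Sat, sL]

theorem eq_of_forall_succ_eq {β : Type} {f : ℕ → β} {i j : ℕ}
    (h : ∀ m, i ≤ m → m < j → f (m + 1) = f m) : ∀ m, i ≤ m → m ≤ j → f m = f i := by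
  intro m him hmj
  induction m, him using Nat.le_induction with
  | base => rfl
  | succ n hin ih => rw [h n hin (by omega), ih (by omega)]

theorem Set.eq_of_diff_singleton_eq {β : Type} {A B : Set β} {a : β}
    (h : A \ {a} = B \ {a}) (ha : a ∈ A ↔ a ∈ B) : A = B := by
  ext x
  by_cases hx : x = a
  · exact hx ▸ ha
  · simpa [hx] using congrArg (x ∈ ·) h

section Block

/-! `P` and `S` stand for the truth values of `π` and of `s` along the word. -/

variable {P S Q : ℕ → Prop} {i j : ℕ}

theorem exists_until_iff_of_block (hij : i ≤ j) (hP : ∀ m, i ≤ m → m ≤ j → (P m ↔ P i))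
    (hS : ∀ m, i ≤ m → m ≤ j → S m) (hSj : ¬ S (j + 1)) :
    (∃ k, i ≤ k ∧ P k ∧ ∀ m, i ≤ m → m < k → S m) ↔ P i ∨ P (j + 1) := by
  constructor
  · rintro ⟨k, hik, hPk, hSk⟩
    rcases Nat.lt_or_ge j k with hjk | hkj
    · obtain rfl : k = j + 1 := by
        by_contra hne
        exact hSj (hSk (j + 1) (by omega) (by omega))
      exact Or.inr hPk
    · exact Or.inl ((hP k hik hkj).mp hPk)
  · rintro (hPi | hPj)
    · exact ⟨i, le_rfl, hPi, fun m h₁ h₂ => absurd h₂ (not_lt.mpr h₁)⟩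
    · exact ⟨j + 1, by omega, hPj, fun m h₁ h₂ => hS m h₁ (by omega)⟩

theorem exists_until_iff_of_not (hSi : ¬ S i) :
    (∃ k, i ≤ k ∧ P k ∧ ∀ m, i ≤ m → m < k → S m) ↔ P i := by
  constructor
  · rintro ⟨k, hik, hPk, hSk⟩
    obtain rfl : k = i := by
      by_contra hne
      exact hSi (hSk i le_rfl (by omega))
    exact hPk
  · exact fun hPi => ⟨i, le_rfl, hPi, fun m h₁ h₂ => absurd h₂ (not_lt.mpr h₁)⟩

theorem release_iff_of_block (hij : i ≤ j) (hP : ∀ m, i ≤ m → m ≤ j → (P m ↔ P i))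
    (hQ : ∀ m, i ≤ m → m ≤ j → ¬ Q m) (hQj : Q (j + 1)) :
    (∀ k, i ≤ k → P k ∨ ∃ m, i ≤ m ∧ m < k ∧ Q m) ↔ P i ∧ P (j + 1) := by
  constructor
  · intro h
    have hP_of_le (k : ℕ) (hik : i ≤ k) (hkj : k ≤ j + 1) : P k :=
      (h k hik).resolve_right fun ⟨m, him, hmk, hQm⟩ => hQ m him (by omega) hQm
    exact ⟨hP_of_le i le_rfl (by omega), hP_of_le (j + 1) (by omega) le_rfl⟩
  · rintro ⟨hPi, hPj⟩ k hik
    rcases Nat.lt_trichotomy k (j + 1) with hkj | rfl | hjk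
    · exact Or.inl ((hP k hik (by omega)).mpr hPi)
    · exact Or.inl hPj
    · exact Or.inr ⟨j + 1, by omega, hjk, hQj⟩

theorem relaxNext_iff_of_flip (hij : i ≤ j) (hP : ∀ m, i ≤ m → m ≤ j → (P m ↔ P i))
    (hS : ∀ m, i ≤ m → m ≤ j → (S m ↔ S i)) (hflip : ¬ (S (j + 1) ↔ S j)) :
    (((∃ k, i ≤ k ∧ P k ∧ ∀ m, i ≤ m → m < k → S m) ∨
        (∃ k, i ≤ k ∧ P k ∧ ∀ m, i ≤ m → m < k → ¬ S m)) ∧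
      (P i ∧ S i → ∀ k, i ≤ k → P k ∨ ∃ m, i ≤ m ∧ m < k ∧ ¬ S m) ∧
      (P i ∧ ¬ S i → ∀ k, i ≤ k → P k ∨ ∃ m, i ≤ m ∧ m < k ∧ S m)) ↔ P (j + 1) := by
  by_cases hSi : S i
  · have hS' (m : ℕ) (him : i ≤ m) (hmj : m ≤ j) : S m := (hS m him hmj).mpr hSi
    have hSj' : ¬ S (j + 1) := fun h => hflip (iff_of_true h (hS' j hij le_rfl))
    rw [exists_until_iff_of_block hij hP hS' hSj', exists_until_iff_of_not (not_not.mpr hSi),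
      release_iff_of_block hij hP (fun m h₁ h₂ => not_not.mpr (hS' m h₁ h₂)) hSj']
    tauto
  · have hS' (m : ℕ) (him : i ≤ m) (hmj : m ≤ j) : ¬ S m := fun h => hSi ((hS m him hmj).mp h)
    have hSj' : S (j + 1) := by_contra fun h => hflip (iff_of_false h (hS' j hij le_rfl))
    rw [exists_until_iff_of_block hij hP hS' (not_not.mpr hSj'), exists_until_iff_of_not hSi,
      release_iff_of_block hij hP hS' hSj']
    tauto

end Block

/-- If every truth-value change of `s` coincides with a change of the restriction of the
word to `𝒫`, `π` is purely propositional over `𝒫`, and `j` is the least position `≥ i`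
where the word changes, then `w,i ⊨ X⟨π⟩ ↔ w,j+1 ⊨ π`. -/
theorem stmt11 {α : Type} (w : Word (α ⊕ Unit))
    (hlink : ∀ j : ℕ,
      (¬((Sum.inr () ∈ w (j+1)) ↔ (Sum.inr () ∈ w j))) ↔
        (w (j+1) \ {Sum.inr ()} ≠ w j \ {Sum.inr ()}))
    (π : LTL α) (hπ : π.Propositional) (i j : ℕ)
    (hij : i ≤ j) (hchange : w (j+1) ≠ w j)
    (hleast : ∀ m, i ≤ m → m < j → w (m+1) = w m) :
    (relaxX (π.map Sum.inl)).Sat w i ↔ (π.map Sum.inl).Sat w (j+1) := by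
  have hconst := eq_of_forall_succ_eq hleast
  have hflip : ¬ (Sum.inr () ∈ w (j + 1) ↔ Sum.inr () ∈ w j) := fun hs =>
    hchange (Set.eq_of_diff_singleton_eq (of_not_not fun hne => (hlink j).mpr hne hs) hs)
  rw [sat_relaxX]
  exact relaxNext_iff_of_flip hij
    (fun m h₁ h₂ => (hπ.map Sum.inl).sat_congr (hconst m h₁ h₂))
    (fun m h₁ h₂ => by rw [hconst m h₁ h₂]) hflip
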